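/- Let G=(V,E) be a finite simple graph with boundary set ∂V ⊆ V such that every diagonal entry of D is strictly positive and such that vol(S) > 0 for every nonempty S ⊆ V. Then λ_R ≤ 2·h_R, i.e. the first nontrivial eigenvalue of the normalized reflected Neumann graph Laplacian is at most twice the Cheeger constant h_R. -/

import Mathlib

open Matrix Finset

namespace RN

variable {V : Type*}

/-- The adjacency matrix of `G` with real entries. -/
noncomputable def adjMat [Fintype V] [DecidableEq V] (G : SimpleGraph V) [DecidableRel G.Adj] :
    Matrix V V ℝ :=
  Matrix.of fun u v => if G.Adj u v then 1 else 0

/-- The reflected adjacency matrix `R = [[A₁₁, A₁₂],[2A₁₂ᵀ, A₂₂]]`, where the first block is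
indexed by the interior vertices and the second block by the boundary vertices `B`. -/
noncomputable def reflAdj [Fintype V] [DecidableEq V] (G : SimpleGraph V) [DecidableRel G.Adj]
    (B : Finset V) : Matrix V V ℝ :=
  Matrix.of fun u v => (if u ∈ B ∧ v ∉ B then 2 else 1) * adjMat G u v

/-- The diagonal entries of `D = diag(R·1)`. -/
noncomputable def deg [Fintype V] [DecidableEq V] (G : SimpleGraph V) [DecidableRel G.Adj]
    (B : Finset V) (v : V) : ℝ :=
  ∑ w, reflAdj G B v w

/-- `D = diag(R·1)`. -/
noncomputable def Dmat [Fintype V] [DecidableEq V] (G : SimpleGraph V) [DecidableRel G.Adj]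
    (B : Finset V) : Matrix V V ℝ :=
  Matrix.diagonal (deg G B)

/-- The reflected Neumann Laplacian `L_R = D - R`. -/
noncomputable def LR [Fintype V] [DecidableEq V] (G : SimpleGraph V) [DecidableRel G.Adj]
    (B : Finset V) : Matrix V V ℝ :=
  Dmat G B - reflAdj G B

/-- The weight `q_v`, which is `1` on interior vertices and `1/2` on boundary vertices. -/
noncomputable def qw [DecidableEq V] (B : Finset V) (v : V) : ℝ := if v ∈ B then 1/2 else 1

/-- The diagonal matrix `Q` with entries `1` on the interior and `1/2` on the boundary. -/
noncomputable def Qmat [Fintype V] [DecidableEq V] (B : Finset V) : Matrix V V ℝ :=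
  Matrix.diagonal (qw B)

/-- `D^{1/2}`. -/
noncomputable def Dhalf [Fintype V] [DecidableEq V] (G : SimpleGraph V) [DecidableRel G.Adj]
    (B : Finset V) : Matrix V V ℝ :=
  Matrix.diagonal fun v => Real.sqrt (deg G B v)

/-- `D^{-1/2}`. -/
noncomputable def Dinvhalf [Fintype V] [DecidableEq V] (G : SimpleGraph V) [DecidableRel G.Adj]
    (B : Finset V) : Matrix V V ℝ :=
  Matrix.diagonal fun v => (Real.sqrt (deg G B v))⁻¹

/-- The normalized reflected Neumann Laplacian `𝓛_R = D^{-1/2} L_R D^{-1/2}`. -/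
noncomputable def NLR [Fintype V] [DecidableEq V] (G : SimpleGraph V) [DecidableRel G.Adj]
    (B : Finset V) : Matrix V V ℝ :=
  Dinvhalf G B * LR G B * Dinvhalf G B

/-- `Q^{1/2}`. -/
noncomputable def Qhalf [Fintype V] [DecidableEq V] (B : Finset V) : Matrix V V ℝ :=
  Matrix.diagonal fun v => Real.sqrt (qw B v)

/-- `Q^{-1/2}`. -/
noncomputable def Qinvhalf [Fintype V] [DecidableEq V] (B : Finset V) : Matrix V V ℝ :=
  Matrix.diagonal fun v => (Real.sqrt (qw B v))⁻¹

/-- The first nontrivial eigenvalue `λ_R` of `𝓛_R`: the infimum of the Rayleigh quotients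
`xᵀ (Q^{1/2} 𝓛_R Q^{-1/2}) x / xᵀx` over nonzero `x` with `xᵀ D^{1/2} Q^{1/2} 1 = 0`. -/
noncomputable def lambdaR [Fintype V] [DecidableEq V] (G : SimpleGraph V) [DecidableRel G.Adj]
    (B : Finset V) : ℝ :=
  sInf {r : ℝ | ∃ x : V → ℝ, x ≠ 0 ∧
    x ⬝ᵥ ((Dhalf G B * Qhalf B) *ᵥ fun _ => 1) = 0 ∧
    r = x ⬝ᵥ ((Qhalf B * NLR G B * Qinvhalf B) *ᵥ x) / (x ⬝ᵥ x)}

/-- `|E(U,W)|`: the number of edges of `G` with one endpoint in `U` and one in `W`. -/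
def ecount [Fintype V] [DecidableEq V] (G : SimpleGraph V) [DecidableRel G.Adj]
    (U W : Finset V) : ℕ :=
  (G.edgeFinset.filter fun e => ∃ u ∈ U, ∃ w ∈ W, e = s(u, w)).card

/-- The measure `m(U,W) = |E(U,W)| - (1/2)|E(U ∩ ∂V, W ∩ ∂V)|`, where `B = ∂V`. -/
noncomputable def mMeas [Fintype V] [DecidableEq V] (G : SimpleGraph V) [DecidableRel G.Adj]
    (B : Finset V) (U W : Finset V) : ℝ :=
  (ecount G U W : ℝ) - (1/2) * (ecount G (U ∩ B) (W ∩ B) : ℝ)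

/-- The volume `vol(U) = Σ_{u ∈ U} m({u}, V)`. -/
noncomputable def vol [Fintype V] [DecidableEq V] (G : SimpleGraph V) [DecidableRel G.Adj]
    (B : Finset V) (U : Finset V) : ℝ :=
  ∑ u ∈ U, mMeas G B {u} Finset.univ

/-- The Cheeger constant `h_R`: the infimum over nonempty proper subsets `S ⊆ V` of
`m(S, V∖S) / min(vol S, vol (V∖S))`. -/
noncomputable def cheegerR [Fintype V] [DecidableEq V] (G : SimpleGraph V) [DecidableRel G.Adj]
    (B : Finset V) : ℝ :=
  sInf {r : ℝ | ∃ S : Finset V, S.Nonempty ∧ S ≠ Finset.univ ∧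
    r = mMeas G B S Sᶜ / min (vol G B S) (vol G B Sᶜ)}

end RN

open RN

/-!
Put `x = D^{1/2} Q^{1/2} f` and `w(u, v) = q_u R_{uv}`, a symmetric weight. Then the Rayleigh
quotient of `Q^{1/2} 𝓛_R Q^{-1/2}` at `x` is `(1/2) Σ w(u,v) (f u - f v)² / Σ q_u d_u (f u)²`,
the constraint reads `Σ q_u d_u f u = 0`, `vol S = Σ_{u ∈ S} q_u d_u` and
`m(S, Sᶜ) = Σ_{u ∈ S, v ∉ S} w(u, v)`. For `f = 𝟙_S - vol S / vol V` the quotient equals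
`m(S, Sᶜ) (1 / vol S + 1 / vol Sᶜ) ≤ 2 m(S, Sᶜ) / min (vol S) (vol Sᶜ)`.
-/

lemma mul_add_div_mul_le_two_mul_div_min {a b m : ℝ} (ha : 0 < a) (hb : 0 < b) (hm : 0 ≤ m) :
    m * (a + b) / (a * b) ≤ 2 * (m / min a b) :=
  calc m * (a + b) / (a * b) = m / a + m / b := by field_simp; ring
    _ ≤ m / min a b + m / min a b :=
        add_le_add (div_le_div_of_nonneg_left hm (lt_min ha hb) (min_le_left a b))
          (div_le_div_of_nonneg_left hm (lt_min ha hb) (min_le_right a b))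
    _ = 2 * (m / min a b) := by ring

namespace RN

section Weights

variable {V : Type*} [DecidableEq V]

lemma qw_pos (B : Finset V) (v : V) : 0 < qw B v := by
  unfold qw; split_ifs <;> norm_num

variable [Fintype V] (G : SimpleGraph V) [DecidableRel G.Adj] (B : Finset V)

/-- Symmetric, because the reflection doubles `R` exactly on the boundary-to-interior entries,
where `q_u = 1/2`. -/
noncomputable def edgeWeight (u v : V) : ℝ := qw B u * reflAdj G B u v

lemma adjMat_comm (u v : V) : adjMat G u v = adjMat G v u := by
  simp [adjMat, G.adj_comm]

lemma reflAdj_nonneg (u v : V) : 0 ≤ reflAdj G B u v := by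
  simp only [reflAdj, adjMat, of_apply]; split_ifs <;> norm_num

lemma deg_nonneg (v : V) : 0 ≤ deg G B v :=
  sum_nonneg fun w _ => reflAdj_nonneg G B v w

lemma edgeWeight_nonneg (u v : V) : 0 ≤ edgeWeight G B u v :=
  mul_nonneg (qw_pos B u).le (reflAdj_nonneg G B u v)

lemma edgeWeight_comm (u v : V) : edgeWeight G B u v = edgeWeight G B v u := by
  by_cases hu : u ∈ B <;> by_cases hv : v ∈ B <;>
    simp [edgeWeight, qw, reflAdj, adjMat_comm G u v, hu, hv]

lemma edgeWeight_eq (u v : V) :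
    edgeWeight G B u v = adjMat G u v - 1 / 2 * if u ∈ B ∧ v ∈ B then adjMat G u v else 0 := by
  by_cases hu : u ∈ B <;> by_cases hv : v ∈ B <;> simp [edgeWeight, qw, reflAdj, hu, hv]; ring

lemma sum_edgeWeight (u : V) : ∑ v, edgeWeight G B u v = qw B u * deg G B u := by
  simp only [edgeWeight, deg, mul_sum]

/-- Without edges inside `U ∩ W`, every edge of `E(U, W)` is counted exactly once by an ordered
pair in `U × W`. -/
lemma ecount_eq_sum_adjMat {U W : Finset V} (h : G.IsIndepSet ↑(U ∩ W)) :
    (ecount G U W : ℝ) = ∑ u ∈ U, ∑ w ∈ W, adjMat G u w := by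
  have hpairs : ecount G U W = #{p ∈ U ×ˢ W | G.Adj p.1 p.2} := by
    refine (card_bij (fun p _ => s(p.1, p.2)) ?_ ?_ ?_).symm
    · intro p hp
      simp only [mem_filter, mem_product] at hp
      simp only [mem_filter, SimpleGraph.mem_edgeFinset, SimpleGraph.mem_edgeSet]
      exact ⟨hp.2, p.1, hp.1.1, p.2, hp.1.2, rfl⟩
    · rintro ⟨a, b⟩ hp ⟨a', b'⟩ hp' heq
      simp only [mem_filter, mem_product] at hp hp'
      rcases Sym2.eq_iff.mp heq with ⟨rfl, rfl⟩ | ⟨rfl, rfl⟩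
      · rfl
      · exact absurd hp.2 (h (by simp [hp.1.1, hp'.1.2]) (by simp [hp'.1.1, hp.1.2]) hp.2.ne)
    · intro e he
      simp only [mem_filter, SimpleGraph.mem_edgeFinset] at he
      obtain ⟨hadj, a, ha, b, hb, rfl⟩ := he
      exact ⟨(a, b), by simpa [ha, hb] using hadj, rfl⟩
  rw [hpairs, ← sum_product' (f := fun u w => adjMat G u w)]
  simp [adjMat, sum_boole]

lemma mMeas_eq_sum_edgeWeight {U W : Finset V} (h : G.IsIndepSet ↑(U ∩ W)) :
    mMeas G B U W = ∑ u ∈ U, ∑ w ∈ W, edgeWeight G B u w := by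
  have hB : G.IsIndepSet ↑(U ∩ B ∩ (W ∩ B)) :=
    h.mono <| coe_subset.mpr <| inter_subset_inter inter_subset_left inter_subset_left
  have hboundary : ∑ u ∈ U ∩ B, ∑ w ∈ W ∩ B, adjMat G u w
      = ∑ u ∈ U, ∑ w ∈ W, if u ∈ B ∧ w ∈ B then adjMat G u w else 0 := by
    simp only [← sum_ite_mem, ite_and, sum_ite_irrel, sum_const_zero]
  rw [mMeas, ecount_eq_sum_adjMat G h, ecount_eq_sum_adjMat G hB, hboundary]
  simp only [edgeWeight_eq, sum_sub_distrib, mul_sum]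

lemma vol_eq_sum (S : Finset V) : vol G B S = ∑ u ∈ S, qw B u * deg G B u := by
  refine sum_congr rfl fun u _ => ?_
  rw [mMeas_eq_sum_edgeWeight G B (by simp), sum_singleton, sum_edgeWeight]

lemma mMeas_compl_eq_sum (S : Finset V) :
    mMeas G B S Sᶜ = ∑ u ∈ S, ∑ v ∈ Sᶜ, edgeWeight G B u v :=
  mMeas_eq_sum_edgeWeight G B (by simp)

lemma mMeas_compl_nonneg (S : Finset V) : 0 ≤ mMeas G B S Sᶜ := by
  rw [mMeas_compl_eq_sum]
  exact sum_nonneg fun u _ => sum_nonneg fun v _ => edgeWeight_nonneg G B u v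

lemma vol_pos (hD : ∀ v, 0 < deg G B v) {S : Finset V} (hS : S.Nonempty) : 0 < vol G B S := by
  rw [vol_eq_sum]
  exact sum_pos (fun u _ => mul_pos (qw_pos B u) (hD u)) hS

lemma sum_qw_mul_deg_mul_ite (S : Finset V) (a b : ℝ) :
    ∑ u, qw B u * deg G B u * (if u ∈ S then a else b) = vol G B S * a + vol G B Sᶜ * b := by
  rw [vol_eq_sum, vol_eq_sum, sum_mul, sum_mul, ← sum_add_sum_compl S]
  congr 1 <;> refine sum_congr rfl fun u hu => ?_
  · rw [if_pos hu]
  · rw [if_neg (mem_compl.mp hu)]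

end Weights

section Rayleigh

variable {V : Type*} [Fintype V] [DecidableEq V] (G : SimpleGraph V) [DecidableRel G.Adj]
  (B : Finset V)

noncomputable def dirichletForm (f : V → ℝ) : ℝ :=
  ∑ u, ∑ v, edgeWeight G B u v * (f u - f v) ^ 2 / 2

lemma dirichletForm_nonneg (f : V → ℝ) : 0 ≤ dirichletForm G B f :=
  sum_nonneg fun u _ => sum_nonneg fun v _ => by have := edgeWeight_nonneg G B u v; positivity

lemma dirichletForm_of_subsingleton [Subsingleton V] (f : V → ℝ) : dirichletForm G B f = 0 :=
  sum_eq_zero fun u _ => sum_eq_zero fun v _ => by simp [Subsingleton.elim u v]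

lemma dirichletForm_ite_mem (S : Finset V) (a b : ℝ) :
    dirichletForm G B (fun u => if u ∈ S then a else b) = (a - b) ^ 2 * mMeas G B S Sᶜ := by
  have hin : ∀ u ∈ S, ∑ v, edgeWeight G B u v * ((if u ∈ S then a else b) -
      (if v ∈ S then a else b)) ^ 2 / 2 = (a - b) ^ 2 / 2 * ∑ v ∈ Sᶜ, edgeWeight G B u v := by
    intro u hu
    rw [← sum_add_sum_compl S, sum_eq_zero fun v hv => by simp [hu, hv], zero_add, mul_sum]
    exact sum_congr rfl fun v hv => by simp [hu, mem_compl.mp hv]; ring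
  have hout : ∀ u ∈ Sᶜ, ∑ v, edgeWeight G B u v * ((if u ∈ S then a else b) -
      (if v ∈ S then a else b)) ^ 2 / 2 = (a - b) ^ 2 / 2 * ∑ v ∈ S, edgeWeight G B u v := by
    intro u hu
    rw [← sum_add_sum_compl S, sum_eq_zero (s := Sᶜ) fun v hv => by
      simp [mem_compl.mp hu, mem_compl.mp hv], add_zero, mul_sum]
    exact sum_congr rfl fun v hv => by simp [mem_compl.mp hu, hv]; ring
  have hsymm : ∑ u ∈ Sᶜ, ∑ v ∈ S, edgeWeight G B u v = mMeas G B S Sᶜ := by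
    rw [mMeas_compl_eq_sum, sum_comm]
    exact sum_congr rfl fun u _ => sum_congr rfl fun v _ => edgeWeight_comm G B v u
  rw [dirichletForm, ← sum_add_sum_compl S, sum_congr rfl hin, sum_congr rfl hout, ← mul_sum,
    ← mul_sum, hsymm, ← mMeas_compl_eq_sum]
  ring

lemma sum_mul_mul_sub_eq_sum_sq_div_two {ι : Type*} [Fintype ι] (w : ι → ι → ℝ)
    (hw : ∀ u v, w u v = w v u) (f : ι → ℝ) :
    ∑ u, ∑ v, w u v * (f u * (f u - f v)) = ∑ u, ∑ v, w u v * (f u - f v) ^ 2 / 2 := by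
  have hswap : ∑ u, ∑ v, w u v * (f v * (f v - f u)) = ∑ u, ∑ v, w u v * (f u * (f u - f v)) := by
    rw [sum_comm]
    exact sum_congr rfl fun u _ => sum_congr rfl fun v _ => by rw [hw]
  calc ∑ u, ∑ v, w u v * (f u * (f u - f v))
      = (∑ u, ∑ v, w u v * (f u * (f u - f v)) + ∑ u, ∑ v, w u v * (f v * (f v - f u))) / 2 := by
        rw [hswap]; ring
    _ = ∑ u, ∑ v, w u v * (f u - f v) ^ 2 / 2 := by
        rw [← sum_add_distrib, sum_div]
        refine sum_congr rfl fun u _ => ?_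
        rw [← sum_add_distrib, sum_div]
        exact sum_congr rfl fun v _ => by ring

lemma dotProduct_Qmat_mul_LR_mulVec (f : V → ℝ) :
    f ⬝ᵥ ((Qmat B * LR G B) *ᵥ f) = dirichletForm G B f := by
  have hrow : ∀ u, ((Qmat B * LR G B) *ᵥ f) u = ∑ v, edgeWeight G B u v * (f u - f v) := by
    intro u
    rw [← mulVec_mulVec, Qmat, mulVec_diagonal, LR, sub_mulVec, Pi.sub_apply, Dmat,
      mulVec_diagonal]
    simp only [deg, edgeWeight, mulVec, dotProduct, mul_sub, sum_sub_distrib, sum_mul, mul_sum,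
      mul_assoc]
  simp only [dotProduct, hrow, mul_sum]
  rw [dirichletForm, ← sum_mul_mul_sub_eq_sum_sq_div_two _ (edgeWeight_comm G B)]
  exact sum_congr rfl fun u _ => sum_congr rfl fun v _ => by ring

lemma diagonal_mulVec_dotProduct_mulVec (a : V → ℝ) (M : Matrix V V ℝ) (f : V → ℝ) :
    (diagonal a *ᵥ f) ⬝ᵥ (M *ᵥ (diagonal a *ᵥ f))
      = f ⬝ᵥ ((diagonal a * M * diagonal a) *ᵥ f) := by
  have hsymm : ∀ y, f ⬝ᵥ (diagonal a *ᵥ y) = (diagonal a *ᵥ f) ⬝ᵥ y := fun y =>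
    sum_congr rfl fun u _ => by simp only [mulVec_diagonal]; ring
  rw [← mulVec_mulVec, ← mulVec_mulVec, hsymm]

lemma Dhalf_mul_Qhalf : Dhalf G B * Qhalf B = diagonal fun v => √(deg G B v) * √(qw B v) :=
  diagonal_mul_diagonal _ _

variable {G B}

lemma Dhalf_mul_Qhalf_mul_conj_NLR (hD : ∀ v, 0 < deg G B v) :
    Dhalf G B * Qhalf B * (Qhalf B * NLR G B * Qinvhalf B) * (Dhalf G B * Qhalf B)
      = Qmat B * LR G B := by
  ext u v
  simp only [Dhalf, Qhalf, diagonal_mul_diagonal, NLR, Dinvhalf, Matrix.mul_assoc, Qinvhalf,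
    mul_diagonal, diagonal_mul, Qmat]
  have hd : √(deg G B u) ≠ 0 := (Real.sqrt_pos.mpr (hD u)).ne'
  have hd' : √(deg G B v) ≠ 0 := (Real.sqrt_pos.mpr (hD v)).ne'
  have hq : √(qw B v) ≠ 0 := (Real.sqrt_pos.mpr (qw_pos B v)).ne'
  field_simp
  rw [Real.sq_sqrt (qw_pos B u).le]
  ring

lemma Dhalf_mul_Qhalf_mulVec_dotProduct (f g : V → ℝ) :
    ((Dhalf G B * Qhalf B) *ᵥ f) ⬝ᵥ ((Dhalf G B * Qhalf B) *ᵥ g)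
      = ∑ u, qw B u * deg G B u * (f u * g u) := by
  rw [Dhalf_mul_Qhalf]
  refine sum_congr rfl fun u _ => ?_
  have hd := Real.mul_self_sqrt (deg_nonneg G B u)
  have hq := Real.mul_self_sqrt (qw_pos B u).le
  simp only [mulVec_diagonal]
  linear_combination (f u * g u * (√(qw B u) * √(qw B u))) * hd + (f u * g u * deg G B u) * hq

lemma Dhalf_mul_Qhalf_mulVec_dotProduct_mulVec (hD : ∀ v, 0 < deg G B v) (f : V → ℝ) :
    ((Dhalf G B * Qhalf B) *ᵥ f) ⬝ᵥ
        ((Qhalf B * NLR G B * Qinvhalf B) *ᵥ ((Dhalf G B * Qhalf B) *ᵥ f))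
      = dirichletForm G B f := by
  rw [← dotProduct_Qmat_mul_LR_mulVec, ← Dhalf_mul_Qhalf_mul_conj_NLR hD, Dhalf_mul_Qhalf]
  exact diagonal_mulVec_dotProduct_mulVec _ _ _

lemma exists_Dhalf_mul_Qhalf_mulVec_eq (hD : ∀ v, 0 < deg G B v) (x : V → ℝ) :
    ∃ f, (Dhalf G B * Qhalf B) *ᵥ f = x := by
  refine ⟨fun u => x u / (√(deg G B u) * √(qw B u)), funext fun u => ?_⟩
  have hd : √(deg G B u) ≠ 0 := (Real.sqrt_pos.mpr (hD u)).ne'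
  have hq : √(qw B u) ≠ 0 := (Real.sqrt_pos.mpr (qw_pos B u)).ne'
  rw [Dhalf_mul_Qhalf, mulVec_diagonal]
  field_simp

lemma lambdaR_le (hD : ∀ v, 0 < deg G B v) {x : V → ℝ} (hx : x ≠ 0)
    (hx1 : x ⬝ᵥ ((Dhalf G B * Qhalf B) *ᵥ fun _ => 1) = 0) :
    lambdaR G B ≤ x ⬝ᵥ ((Qhalf B * NLR G B * Qinvhalf B) *ᵥ x) / (x ⬝ᵥ x) := by
  refine csInf_le ⟨0, ?_⟩ ⟨x, hx, hx1, rfl⟩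
  rintro _ ⟨y, -, -, rfl⟩
  obtain ⟨f, rfl⟩ := exists_Dhalf_mul_Qhalf_mulVec_eq hD y
  rw [Dhalf_mul_Qhalf_mulVec_dotProduct_mulVec hD]
  exact div_nonneg (dirichletForm_nonneg G B f) (sum_nonneg fun u _ => mul_self_nonneg _)

lemma lambdaR_nonpos_of_subsingleton [Subsingleton V] (hD : ∀ v, 0 < deg G B v) :
    lambdaR G B ≤ 0 := by
  refine Real.sInf_nonpos fun _ ⟨y, _, _, hr⟩ => ?_
  obtain ⟨f, rfl⟩ := exists_Dhalf_mul_Qhalf_mulVec_eq hD y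
  rw [hr, Dhalf_mul_Qhalf_mulVec_dotProduct_mulVec hD, dirichletForm_of_subsingleton, zero_div]

end Rayleigh

section Cheeger

variable {V : Type*} [Fintype V] [DecidableEq V] {G : SimpleGraph V} [DecidableRel G.Adj]
  {B : Finset V}

lemma lambdaR_le_two_mul_cut (hD : ∀ v, 0 < deg G B v) {S : Finset V} (hS : S.Nonempty)
    (hSc : Sᶜ.Nonempty) :
    lambdaR G B ≤ 2 * (mMeas G B S Sᶜ / min (vol G B S) (vol G B Sᶜ)) := by
  set a := vol G B S
  set b := vol G B Sᶜ
  have ha : 0 < a := vol_pos G B hD hS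
  have hb : 0 < b := vol_pos G B hD hSc
  set c := a / (a + b)
  have hc : c * (a + b) = a := div_mul_cancel₀ a (add_pos ha hb).ne'
  set x := (Dhalf G B * Qhalf B) *ᵥ fun u => if u ∈ S then 1 - c else -c
  have hxx : x ⬝ᵥ x = a * b / (a + b) := by
    rw [Dhalf_mul_Qhalf_mulVec_dotProduct]
    calc _ = ∑ u, qw B u * deg G B u * (if u ∈ S then (1 - c) ^ 2 else c ^ 2) :=
          sum_congr rfl fun u _ => by split_ifs <;> ring
      _ = a * b / (a + b) := by
          rw [sum_qw_mul_deg_mul_ite, eq_div_iff (add_pos ha hb).ne']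
          linear_combination (c * (a + b) - a) * hc
  have hx1 : x ⬝ᵥ ((Dhalf G B * Qhalf B) *ᵥ fun _ => 1) = 0 := by
    rw [Dhalf_mul_Qhalf_mulVec_dotProduct]
    calc _ = ∑ u, qw B u * deg G B u * (if u ∈ S then 1 - c else -c) :=
          sum_congr rfl fun u _ => by rw [mul_one]
      _ = 0 := by
          rw [sum_qw_mul_deg_mul_ite]
          linear_combination -hc
  have hx : x ≠ 0 := fun h => by
    rw [h, zero_dotProduct] at hxx
    exact (div_pos (mul_pos ha hb) (add_pos ha hb)).ne hxx
  calc lambdaR G B ≤ x ⬝ᵥ ((Qhalf B * NLR G B * Qinvhalf B) *ᵥ x) / (x ⬝ᵥ x) :=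
        lambdaR_le hD hx hx1
    _ = mMeas G B S Sᶜ * (a + b) / (a * b) := by
        rw [Dhalf_mul_Qhalf_mulVec_dotProduct_mulVec hD, dirichletForm_ite_mem, hxx,
          show (1 - c - -c) ^ 2 = 1 by ring, one_mul, div_div_eq_mul_div]
    _ ≤ 2 * (mMeas G B S Sᶜ / min a b) :=
        mul_add_div_mul_le_two_mul_div_min ha hb (mMeas_compl_nonneg G B S)

end Cheeger

end RN

theorem lambdaR_le_two_mul_cheegerR_general {V : Type*} [Fintype V] [DecidableEq V]
    (G : SimpleGraph V) [DecidableRel G.Adj] (B : Finset V)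
    (hD : ∀ v, 0 < deg G B v) :
    lambdaR G B ≤ 2 * cheegerR G B := by
  by_cases hsplit : ∃ S : Finset V, S.Nonempty ∧ S ≠ univ
  · obtain ⟨S₀, hS₀, hS₀'⟩ := hsplit
    have hbound : lambdaR G B / 2 ≤ cheegerR G B := by
      refine le_csInf ⟨_, S₀, hS₀, hS₀', rfl⟩ fun _ ⟨S, hS, hS', hr⟩ => ?_
      have hSc : Sᶜ.Nonempty := by rwa [nonempty_iff_ne_empty, Ne, compl_eq_empty_iff]
      rw [hr]
      linarith [lambdaR_le_two_mul_cut hD hS hSc]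
    linarith
  · push Not at hsplit
    have : Subsingleton V :=
      ⟨fun u v => mem_singleton.mp (hsplit {u} (singleton_nonempty u) ▸ mem_univ v) |>.symm⟩
    have hempty : cheegerR G B = 0 := by
      refine (congrArg sInf (Set.eq_empty_of_forall_notMem ?_)).trans Real.sInf_empty
      rintro _ ⟨S, hS, hS', -⟩
      exact hS' (hsplit S hS)
    rw [hempty, mul_zero]
    exact lambdaR_nonpos_of_subsingleton hD

/-- **Trivial direction of the Cheeger inequality.** For a finite simple graph `G` with
boundary `B ⊆ V` such that every diagonal entry of `D` is strictly positive and `vol(S) > 0`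
for every nonempty `S ⊆ V`, the first nontrivial eigenvalue of the normalized reflected
Neumann Laplacian satisfies `λ_R ≤ 2 h_R`. -/
theorem lambdaR_le_two_mul_cheegerR {V : Type*} [Fintype V] [DecidableEq V]
    (G : SimpleGraph V) [DecidableRel G.Adj] (B : Finset V)
    (hD : ∀ v, 0 < deg G B v)
    (hvol : ∀ S : Finset V, S.Nonempty → 0 < vol G B S) :
    lambdaR G B ≤ 2 * cheegerR G B :=
  lambdaR_le_two_mul_cheegerR_general G B hD
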